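/- arXiv:math/0006154 — 2 statements merged into one kernel-verified Lean document; each statement's English description precedes it below -/
import Mathlib

section
/- Let $(V,\omega_1,\ldots,\omega_s)$ be a non-degenerate polysymplectic vector space of rank $n$ with $s>1$. Then the subspace of $V$ spanned by $e^1_1,\ldots,e^s_n$ is the same for every polysymplectic basis $e_1,\ldots,e_n,e^1_1,\ldots,e^s_n$; i.e. there is a canonically determined subspace of $V$ of dimension $ns$. -/
/-!
The span of the vectors `e^j_i` is intrinsic because it equals `⨆ j, ker ω_j`. Indeed, `e^k_i`
lies in `ker ω_j` for every `j ≠ k`, and such a `j` exists since `s > 1`; conversely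
`ω_j v e^j_i` is the `e_i`-coordinate of `v`, so a vector in `ker ω_j` has no `e_i`-components.
-/

open Module

section

variable {R V ι J : Type*} [CommRing R] [AddCommGroup V] [Module R V] [Fintype ι]

def IsPolysymplecticBasis (e : Basis (ι ⊕ ι × J) R V) (ω : J → V →ₗ[R] V →ₗ[R] R) : Prop :=
  ∀ (j : J) (v w : V), ω j v w = ∑ i : ι,
    (e.coord (Sum.inl i) v * e.coord (Sum.inr (i, j)) w
      - e.coord (Sum.inl i) w * e.coord (Sum.inr (i, j)) v)

namespace IsPolysymplecticBasis

variable {e : Basis (ι ⊕ ι × J) R V} {ω : J → V →ₗ[R] V →ₗ[R] R}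

theorem basis_inr_mem_ker (h : IsPolysymplecticBasis e ω) {j k : J} (hjk : j ≠ k) (i : ι) :
    e (Sum.inr (i, k)) ∈ LinearMap.ker (ω j) := by
  rw [LinearMap.mem_ker]
  ext w
  simp [h j, Basis.coord_apply, hjk]

theorem apply_basis_inr_self (h : IsPolysymplecticBasis e ω) (v : V) (i : ι) (j : J) :
    ω j v (e (Sum.inr (i, j))) = e.coord (Sum.inl i) v := by
  classical
  simp [h j, Basis.coord_apply, Finsupp.single_apply]

theorem ker_le_span_basis_inr (h : IsPolysymplecticBasis e ω) (j : J) :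
    LinearMap.ker (ω j) ≤ Submodule.span R (Set.range fun p : ι × J => e (Sum.inr p)) := by
  intro v hv
  have hinl : ∀ i, e.repr v (Sum.inl i) = 0 := fun i => by
    rw [← Basis.coord_apply, ← h.apply_basis_inr_self, LinearMap.mem_ker.mp hv,
      LinearMap.zero_apply]
  rw [Set.range_comp' e Sum.inr, Basis.mem_span_image]
  rintro (i | p) hx
  · exact absurd (hinl i) (Finsupp.mem_support_iff.mp hx)
  · exact ⟨p, rfl⟩

theorem span_basis_inr_eq_iSup_ker [Nontrivial J] (h : IsPolysymplecticBasis e ω) :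
    Submodule.span R (Set.range fun p : ι × J => e (Sum.inr p))
      = ⨆ j, LinearMap.ker (ω j) := by
  refine le_antisymm ?_ (iSup_le h.ker_le_span_basis_inr)
  rw [Submodule.span_le]
  rintro _ ⟨⟨i, k⟩, rfl⟩
  obtain ⟨j, hjk⟩ := exists_ne k
  exact Submodule.mem_iSup_of_mem j (h.basis_inr_mem_ker hjk i)

end IsPolysymplecticBasis

end

theorem stmt6 (n s : ℕ) (hs : 1 < s) (V : Type*) [AddCommGroup V] [Module ℝ V]
    (e f : Module.Basis (Fin n ⊕ Fin n × Fin s) ℝ V)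
    (ω : Fin s → V →ₗ[ℝ] V →ₗ[ℝ] ℝ)
    (hωe : ∀ (j : Fin s) (v w : V),
      ω j v w = ∑ i : Fin n,
        (e.coord (Sum.inl i) v * e.coord (Sum.inr (i, j)) w
          - e.coord (Sum.inl i) w * e.coord (Sum.inr (i, j)) v))
    (hωf : ∀ (j : Fin s) (v w : V),
      ω j v w = ∑ i : Fin n,
        (f.coord (Sum.inl i) v * f.coord (Sum.inr (i, j)) w
          - f.coord (Sum.inl i) w * f.coord (Sum.inr (i, j)) v)) :
    Submodule.span ℝ (Set.range fun p : Fin n × Fin s => e (Sum.inr p))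
      = Submodule.span ℝ (Set.range fun p : Fin n × Fin s => f (Sum.inr p))
    ∧ Module.finrank ℝ
        ↥(Submodule.span ℝ (Set.range fun p : Fin n × Fin s => e (Sum.inr p))) = n * s := by
  have : Nontrivial (Fin s) := Fin.nontrivial_iff_two_le.mpr hs
  refine ⟨?_, ?_⟩
  · rw [IsPolysymplecticBasis.span_basis_inr_eq_iSup_ker hωe,
      IsPolysymplecticBasis.span_basis_inr_eq_iSup_ker hωf]
  · have hli : LinearIndependent ℝ fun p : Fin n × Fin s => e (Sum.inr p) :=
      e.linearIndependent.comp _ Sum.inr_injective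
    rw [finrank_span_eq_card hli, Fintype.card_prod, Fintype.card_fin, Fintype.card_fin]
end

section
/- In the setting of the Lefschetz operators $L_k$, $\Lambda_k$, $H_k=[L_k,\Lambda_k]$ on the exterior algebra of a real vector space of dimension $n(s+1)$ with a flat polysymplectic structure $\omega_k = \sum_i dx_i\wedge dy^k_i$ and the standard inner product, for $k\neq h$ one has $[H_k, L_h] = L_h$ and $[H_k,\Lambda_h] = -\Lambda_h$. -/
/-!
STATEMENT 9: With the flat Lefschetz operators `L_k`, their adjoints `Λ_k` (with
respect to the inner product making the basis monomials orthonormal) and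
`H_k = [L_k, Λ_k]`, for `k ≠ h` one has `[H_k, L_h] = L_h` and `[H_k, Λ_h] = -Λ_h`.
-/

noncomputable section

abbrev Idx (n s : ℕ) := Fin n ⊕ (Fin n × Fin s)

abbrev Vns (n s : ℕ) := Idx n s → ℝ

abbrev Wns (n s : ℕ) := ExteriorAlgebra ℝ (Vns n s)

def bV (n s : ℕ) : Module.Basis (Idx n s) ℝ (Vns n s) := Pi.basisFun ℝ _

/-- An identification of the index set with `Fin (n + n*s)`, fixing an ordering of the
basis covectors `dx_1, …, dx_n, dy^1_1, …, dy^s_n`. -/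
def idxEquiv (n s : ℕ) : Idx n s ≃ Fin (n + n * s) :=
  (Equiv.sumCongr (Equiv.refl (Fin n)) finProdFinEquiv).trans finSumFinEquiv

/-- The basis monomial `e_{a_1} ∧ ⋯ ∧ e_{a_k}` of the exterior algebra associated to a
finite set `P` of indices (taken in increasing order). -/
def mono (n s : ℕ) (P : Finset (Idx n s)) : Wns n s :=
  (((P.image (idxEquiv n s)).sort (· ≤ ·)).map
    fun t => ExteriorAlgebra.ι ℝ (bV n s ((idxEquiv n s).symm t))).prod

/-- The Lefschetz operator `L_k`: wedge multiplication by `ω_k = ∑ i, dx_i ∧ dy^k_i`. -/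
def Lop (n s : ℕ) (k : Fin s) : Wns n s →ₗ[ℝ] Wns n s :=
  LinearMap.mulLeft ℝ
    (∑ i : Fin n,
      ExteriorAlgebra.ι ℝ (bV n s (Sum.inl i))
        * ExteriorAlgebra.ι ℝ (bV n s (Sum.inr (i, k))))

/-- Commutator of endomorphisms. -/
def lcomm {R M : Type*} [CommSemiring R] [AddCommGroup M] [Module R M]
    (A B : M →ₗ[R] M) : M →ₗ[R] M :=
  A ∘ₗ B - B ∘ₗ A

/-!
Wedging with a basis covector `e_p` and contracting with its dual are creation and annihilation
operators `a_p`, `c_p` obeying the canonical anticommutation relations, and `c_p` is the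
adjoint of `a_p` for the inner product making the monomials orthonormal. Hence
`L_k = ∑ a_{x_i} a_{y^k_i}`, `Λ_k = ∑ c_{y^k_i} c_{x_i}` and
`H_k = ∑_i (N_{x_i} + N_{y^k_i} - 1)` with number operators `N_p = a_p c_p`. Bracketing with
`N_p` is a derivation with `[N_p, a_q] = δ_{pq} a_q` and `[N_p, c_q] = -δ_{pq} c_q`, so for
`k ≠ h` every term `a_{x_j} a_{y^h_j}` of `L_h` is an eigenvector of `[H_k, ·]` with
eigenvalue `1` (only `N_{x_j}` sees it), and every term of `Λ_h` one with eigenvalue `-1`.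
-/

open Finset

theorem Ring.lie_mul {A : Type*} [Ring A] (x y z : A) :
    ⁅x, y * z⁆ = ⁅x, y⁆ * z + y * ⁅x, z⁆ := by
  simp only [Ring.lie_def]
  noncomm_ring

theorem Ring.one_lie {A : Type*} [Ring A] (x : A) : ⁅(1 : A), x⁆ = 0 :=
  (Commute.one_left x).lie_eq

/-- The canonical anticommutation relations (CAR). -/
structure IsCAR {A κ : Type*} [Ring A] [DecidableEq κ] (a c : κ → A) : Prop where
  creation_mul_self : ∀ i, a i * a i = 0
  creation_mul_creation : ∀ i j, a i * a j = -(a j * a i)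
  annihilation_mul_self : ∀ i, c i * c i = 0
  annihilation_mul_annihilation : ∀ i j, c i * c j = -(c j * c i)
  annihilation_mul_creation : ∀ i j, c i * a j = (if i = j then 1 else 0) - a j * c i

namespace IsCAR

variable {A κ : Type*} [Ring A] [DecidableEq κ] {a c : κ → A}

theorem annihilation_mul_creation_self (h : IsCAR a c) (i : κ) : c i * a i = 1 - a i * c i := by
  rw [h.annihilation_mul_creation, if_pos rfl]

theorem annihilation_mul_creation_of_ne (h : IsCAR a c) {i j : κ} (hij : i ≠ j) :
    c i * a j = -(a j * c i) := by
  rw [h.annihilation_mul_creation, if_neg hij, zero_sub]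

theorem lie_number_creation (h : IsCAR a c) (i j : κ) :
    ⁅a i * c i, a j⁆ = if i = j then a j else 0 := by
  rw [Ring.lie_def, mul_assoc]
  split_ifs with hij
  · subst hij
    rw [h.annihilation_mul_creation_self, mul_sub, mul_one, ← mul_assoc, h.creation_mul_self]
    noncomm_ring
  · rw [h.annihilation_mul_creation_of_ne hij, ← mul_assoc (a j), h.creation_mul_creation j i]
    noncomm_ring

theorem lie_number_annihilation (h : IsCAR a c) (i j : κ) :
    ⁅a i * c i, c j⁆ = if i = j then -c j else 0 := by
  rw [Ring.lie_def, mul_assoc, ← mul_assoc (c j)]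
  split_ifs with hij
  · subst hij
    rw [h.annihilation_mul_self, h.annihilation_mul_creation_self, sub_mul, mul_assoc (a i),
      h.annihilation_mul_self]
    noncomm_ring
  · rw [h.annihilation_mul_annihilation i j, h.annihilation_mul_creation_of_ne (Ne.symm hij)]
    noncomm_ring

theorem commute_creation_mul_creation (h : IsCAR a c) {i j k : κ} (hi : i ≠ k) (hj : j ≠ k) :
    Commute (a i * a j) (c k) := by
  change a i * a j * c k = c k * (a i * a j)
  rw [← mul_assoc, h.annihilation_mul_creation_of_ne hi.symm, neg_mul, mul_assoc (a i) (c k),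
    h.annihilation_mul_creation_of_ne hj.symm]
  noncomm_ring

theorem lie_creation_mul_creation_annihilation_mul_annihilation (h : IsCAR a c) {i j : κ}
    (hij : i ≠ j) : ⁅a i * a j, c j * c i⁆ = a i * c i + a j * c j - 1 := by
  have key : c j * c i * (a i * a j) = 1 - a j * c j - a i * c i + a i * a j * (c j * c i) :=
    calc c j * c i * (a i * a j)
        = c j * (c i * a i) * a j := by noncomm_ring
      _ = c j * a j - c j * a i * (c i * a j) := by
        rw [h.annihilation_mul_creation_self i]; noncomm_ring
      _ = c j * a j - a i * (c j * a j) * c i := by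
        rw [h.annihilation_mul_creation_of_ne hij.symm, h.annihilation_mul_creation_of_ne hij]
        noncomm_ring
      _ = 1 - a j * c j - a i * c i + a i * a j * (c j * c i) := by
        rw [h.annihilation_mul_creation_self j]; noncomm_ring
  rw [Ring.lie_def, key]
  noncomm_ring

end IsCAR

namespace LinearMap

variable {R E κ : Type*} [CommRing R] [AddCommGroup E] [Module R E]
  {B : E →ₗ[R] E →ₗ[R] R} {f : κ → E}

theorem separatingRight_of_orthonormal [DecidableEq κ]
    (hf : Submodule.span R (Set.range f) = ⊤)
    (hB : ∀ i j, B (f i) (f j) = if i = j then 1 else 0) : B.SeparatingRight := by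
  intro y hy
  obtain ⟨c, rfl⟩ :=
    Finsupp.mem_span_range_iff_exists_finsupp.1 (hf ▸ Submodule.mem_top (x := y))
  have hc : c = 0 := Finsupp.ext fun i => by
    simpa [Finsupp.sum, map_sum, hB, Finset.sum_ite_eq, Finsupp.mem_support_iff] using hy (f i)
  simp [hc]

theorem isAdjointPair_of_span (hf : Submodule.span R (Set.range f) = ⊤) {T T' : Module.End R E}
    (h : ∀ i j, B (T (f i)) (f j) = B (f i) (T' (f j))) : IsAdjointPair B B T T' := by
  rw [isAdjointPair_iff_comp_eq_compl₂]
  refine ext_on hf ?_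
  rintro _ ⟨i, rfl⟩
  refine ext_on hf ?_
  rintro _ ⟨j, rfl⟩
  exact h i j

theorem IsAdjointPair.eq_of_separatingRight (hB : B.SeparatingRight) {T S S' : Module.End R E}
    (h : IsAdjointPair B B T S) (h' : IsAdjointPair B B T S') : S = S' := by
  ext y
  rw [← sub_eq_zero]
  refine hB _ fun x => ?_
  rw [map_sub, ← h, ← h', sub_self]

theorem isAdjointPair_sum {ι : Type*} (s : Finset ι) {T S : ι → Module.End R E}
    (h : ∀ i ∈ s, IsAdjointPair B B (T i) (S i)) :
    IsAdjointPair B B ⇑(∑ i ∈ s, T i) ⇑(∑ i ∈ s, S i) := fun x y => by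
  simp only [LinearMap.sum_apply, map_sum]
  exact Finset.sum_congr rfl fun i hi => h i hi x y

end LinearMap

namespace ExteriorAlgebra

section SortedProd

variable {R M I : Type*} [CommRing R] [AddCommGroup M] [Module R M] [LinearOrder I]

variable (R) in
def sortedProd (v : I → M) (S : Finset I) : ExteriorAlgebra R M :=
  ((S.sort (· ≤ ·)).map fun i => ι R (v i)).prod

variable {v : I → M}

@[simp]
theorem sortedProd_empty : sortedProd R v ∅ = 1 := by
  simp [sortedProd]

theorem sortedProd_insert_of_forall_lt {a : I} {S : Finset I} (ha : ∀ x ∈ S, a < x) :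
    sortedProd R v (insert a S) = ι R (v a) * sortedProd R v S := by
  rw [sortedProd, Finset.sort_insert _ (fun x hx => (ha x hx).le)
    (fun h => lt_irrefl a (ha a h))]
  rfl

theorem ι_mul_ι_anticomm (x y : M) : ι R x * ι R y = -(ι R y * ι R x) :=
  eq_neg_of_add_eq_zero_left (ι_add_mul_swap x y)

theorem ι_mul_sortedProd (t : I) (S : Finset I) :
    ι R (v t) * sortedProd R v S =
      if t ∈ S then 0 else (-1 : R) ^ #{x ∈ S | x < t} • sortedProd R v (insert t S) := by
  induction S using Finset.induction_on_min with
  | empty => simp [sortedProd]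
  | insert a S ha ih =>
    rcases lt_trichotomy t a with hta | rfl | hat
    · have hlt : ∀ x ∈ insert a S, t < x := by
        simpa [hta] using fun x hx => hta.trans (ha x hx)
      rw [if_neg fun h => lt_irrefl t (hlt t h), sortedProd_insert_of_forall_lt hlt,
        filter_false_of_mem fun x hx => not_lt.2 (hlt x hx).le, card_empty, pow_zero, one_smul]
    · rw [if_pos (mem_insert_self t S), sortedProd_insert_of_forall_lt ha, ← mul_assoc,
        ι_sq_zero, zero_mul]
    · have hcount : #{x ∈ insert a S | x < t} = #{x ∈ S | x < t} + 1 := by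
        rw [filter_insert, if_pos hat, card_insert_of_notMem]
        simp only [mem_filter, not_and]
        exact fun h => absurd (ha a h) (lt_irrefl a)
      have hmem : t ∈ insert a S ↔ t ∈ S := by simp [hat.ne']
      have hins : sortedProd R v (insert t (insert a S)) =
          ι R (v a) * sortedProd R v (insert t S) := by
        rw [insert_comm, sortedProd_insert_of_forall_lt (by simpa [hat] using ha)]
      rw [sortedProd_insert_of_forall_lt ha, ← mul_assoc, ι_mul_ι_anticomm, neg_mul, mul_assoc,
        ih]
      simp only [hmem, hins, hcount]
      split_ifs
      · simp
      · rw [mul_smul_comm, pow_succ, mul_neg_one, neg_smul]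

open CliffordAlgebra in
theorem contractLeft_sortedProd {d : Module.Dual R M} {p : I}
    (hd : ∀ i, d (v i) = if i = p then 1 else 0) (S : Finset I) :
    contractLeft d (sortedProd R v S) =
      if p ∈ S then (-1 : R) ^ #{x ∈ S | x < p} • sortedProd R v (S.erase p) else 0 := by
  induction S using Finset.induction_on_min with
  | empty => simp
  | insert a S ha ih =>
    rw [sortedProd_insert_of_forall_lt ha, contractLeft_ι_mul, hd, ih]
    by_cases hap : a = p
    · subst hap
      have hpS : a ∉ S := fun h => lt_irrefl a (ha a h)
      rw [if_neg hpS, if_pos (mem_insert_self a S), erase_insert hpS,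
        filter_false_of_mem fun x hx => ?_]
      · simp
      · rcases mem_insert.1 hx with rfl | hx
        · exact lt_irrefl x
        · exact not_lt.2 (ha x hx).le
    · have hmem : p ∈ insert a S ↔ p ∈ S := by simp [Ne.symm hap]
      simp only [if_neg hap, zero_smul, zero_sub, hmem]
      split_ifs with hpS
      · have hcount : #{x ∈ insert a S | x < p} = #{x ∈ S | x < p} + 1 := by
          rw [filter_insert, if_pos (ha p hpS), card_insert_of_notMem]
          simp only [mem_filter, not_and]
          exact fun h => absurd (ha a h) (lt_irrefl a)
        rw [erase_insert_of_ne hap,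
          sortedProd_insert_of_forall_lt fun x hx => ha x (mem_of_mem_erase hx), hcount,
          mul_smul_comm, pow_succ, mul_neg_one, neg_smul]
      · simp

theorem span_range_sortedProd (hv : Submodule.span R (Set.range v) = ⊤) :
    Submodule.span R (Set.range (sortedProd R v)) = ⊤ := by
  set S := Submodule.span R (Set.range (sortedProd R v))
  -- `S` is a left ideal containing `1 = sortedProd R v ∅`.
  have hvS : ∀ t, ∀ y ∈ S, ι R (v t) * y ∈ S := fun t y hy => by
    refine (Submodule.span_le (p := S.comap (LinearMap.mulLeft R (ι R (v t)))).2 ?_ hy)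
    rintro _ ⟨P, rfl⟩
    simp only [SetLike.mem_coe, Submodule.mem_comap, LinearMap.mulLeft_apply, ι_mul_sortedProd]
    split_ifs
    · exact S.zero_mem
    · exact S.smul_mem _ (Submodule.subset_span ⟨_, rfl⟩)
  have hιS : ∀ m, ∀ y ∈ S, ι R m * y ∈ S := fun m y hy => by
    induction (hv ▸ Submodule.mem_top : m ∈ Submodule.span R (Set.range v))
      using Submodule.span_induction with
    | mem _ hm => obtain ⟨t, rfl⟩ := hm; exact hvS t y hy
    | zero => simp
    | add _ _ _ _ h₁ h₂ => rw [map_add, add_mul]; exact S.add_mem h₁ h₂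
    | smul c _ _ h => rw [map_smul, smul_mul_assoc]; exact S.smul_mem c h
  have hmulS : ∀ x, ∀ y ∈ S, x * y ∈ S := fun x => by
    induction x using ExteriorAlgebra.induction with
    | algebraMap r => exact fun y hy => by rw [← Algebra.smul_def]; exact S.smul_mem r hy
    | ι m => exact hιS m
    | mul a b ha hb => exact fun y hy => by rw [mul_assoc]; exact ha _ (hb y hy)
    | add a b ha hb => exact fun y hy => by rw [add_mul]; exact S.add_mem (ha y hy) (hb y hy)
  refine Submodule.eq_top_iff'.2 fun x => ?_
  simpa using hmulS x 1 (Submodule.subset_span ⟨∅, sortedProd_empty⟩)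

end SortedProd

section Operators

variable {R M κ : Type*} [CommRing R] [AddCommGroup M] [Module R M] (b : Module.Basis κ R M)

def creation (i : κ) : Module.End R (ExteriorAlgebra R M) :=
  LinearMap.mulLeft R (ι R (b i))

def annihilation (i : κ) : Module.End R (ExteriorAlgebra R M) :=
  CliffordAlgebra.contractLeft (b.coord i)

theorem isCAR_creation_annihilation [DecidableEq κ] : IsCAR (creation b) (annihilation b) where
  creation_mul_self i := LinearMap.ext fun x => by simp [creation, ← mul_assoc]
  creation_mul_creation i j := LinearMap.ext fun x => by
    simp [creation, ← mul_assoc, ι_mul_ι_anticomm (R := R) (b i) (b j)]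
  annihilation_mul_self i := LinearMap.ext fun x => CliffordAlgebra.contractLeft_contractLeft _ x
  annihilation_mul_annihilation i j :=
    LinearMap.ext fun x => CliffordAlgebra.contractLeft_comm _ _ x
  annihilation_mul_creation i j := LinearMap.ext fun x => by
    by_cases hij : i = j
    · subst hij
      simp [annihilation, creation, CliffordAlgebra.contractLeft_ι_mul]
    · simp [annihilation, creation, CliffordAlgebra.contractLeft_ι_mul, Module.Basis.coord_apply,
        hij]

theorem creation_reindex {κ' : Type*} (e : κ ≃ κ') (i : κ) :
    creation (b.reindex e) (e i) = creation b i := by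
  simp [creation]

theorem annihilation_reindex {κ' : Type*} (e : κ ≃ κ') (i : κ) :
    annihilation (b.reindex e) (e i) = annihilation b i := by
  simp only [annihilation]
  congr 1
  ext x
  simp [Module.Basis.coord_apply]

theorem isAdjointPair_creation_annihilation [LinearOrder κ]
    {B : ExteriorAlgebra R M →ₗ[R] ExteriorAlgebra R M →ₗ[R] R}
    (hB : ∀ S T, B (sortedProd R b S) (sortedProd R b T) = if S = T then 1 else 0) (p : κ) :
    LinearMap.IsAdjointPair B B (creation b p) (annihilation b p) := by
  have hd : ∀ i, b.coord p (b i) = if i = p then 1 else 0 := fun i => by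
    simp [Module.Basis.coord_apply, Finsupp.single_apply, eq_comm]
  refine LinearMap.isAdjointPair_of_span (span_range_sortedProd b.span_eq) fun P Q => ?_
  rw [creation, annihilation, LinearMap.mulLeft_apply, ι_mul_sortedProd,
    contractLeft_sortedProd hd]
  by_cases hPQ : insert p P = Q
  · subst hPQ
    by_cases hp : p ∈ P
    · have hne : P ≠ P.erase p := fun h => notMem_erase p P (h ▸ hp)
      simp [hp, hB, hne]
    · have hcount : #{x ∈ insert p P | x < p} = #{x ∈ P | x < p} := by
        rw [filter_insert, if_neg (lt_irrefl p)]
      simp [hp, hcount, erase_insert hp, hB]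
  · have hPQ' : p ∈ Q → P ≠ Q.erase p := fun hQ h => hPQ (by rw [h, insert_erase hQ])
    split_ifs with hP hQ hQ
    · simp [hB, hPQ' hQ]
    · simp
    · simp [hB, hPQ, hPQ' hQ]
    · simp [hB, hPQ]

end Operators

end ExteriorAlgebra

section Lefschetz

attribute [local instance] LieRing.ofAssociativeRing

variable {A : Type*} [Ring A] {n s : ℕ}

def lefschetz (a : Idx n s → A) (k : Fin s) : A :=
  ∑ i, a (.inl i) * a (.inr (i, k))

def dualLefschetz (c : Idx n s → A) (k : Fin s) : A :=
  ∑ i, c (.inr (i, k)) * c (.inl i)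

variable {a c : Idx n s → A}

theorem IsCAR.lie_lefschetz_dualLefschetz (h : IsCAR a c) (k : Fin s) :
    ⁅lefschetz a k, dualLefschetz c k⁆ =
      ∑ i, (a (.inl i) * c (.inl i) + a (.inr (i, k)) * c (.inr (i, k)) - 1) := by
  simp only [lefschetz, dualLefschetz, sum_lie, lie_sum]
  refine Finset.sum_congr rfl fun i _ => ?_
  rw [Finset.sum_eq_single i]
  · exact h.lie_creation_mul_creation_annihilation_mul_annihilation (by simp)
  · intro j _ hji
    exact (Commute.mul_right (h.commute_creation_mul_creation (by simp) (by simp [hji]))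
      (h.commute_creation_mul_creation (by simp [hji]) (by simp))).lie_eq
  · simp

theorem IsCAR.lie_lie_lefschetz_of_ne (h : IsCAR a c) {k l : Fin s} (hkl : k ≠ l) :
    ⁅⁅lefschetz a k, dualLefschetz c k⁆, lefschetz a l⁆ = lefschetz a l := by
  rw [h.lie_lefschetz_dualLefschetz, lefschetz, lie_sum]
  refine Finset.sum_congr rfl fun j _ => ?_
  rw [sum_lie]
  simp only [sub_lie, add_lie, Ring.one_lie, Ring.lie_mul, h.lie_number_creation]
  simp [hkl]

theorem IsCAR.lie_lie_dualLefschetz_of_ne (h : IsCAR a c) {k l : Fin s} (hkl : k ≠ l) :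
    ⁅⁅lefschetz a k, dualLefschetz c k⁆, dualLefschetz c l⁆ = -dualLefschetz c l := by
  rw [h.lie_lefschetz_dualLefschetz, dualLefschetz, lie_sum, ← Finset.sum_neg_distrib]
  refine Finset.sum_congr rfl fun j _ => ?_
  rw [sum_lie]
  simp only [sub_lie, add_lie, Ring.one_lie, Ring.lie_mul, h.lie_number_annihilation]
  simp [hkl]

theorem isAdjointPair_lefschetz {R E : Type*} [CommRing R] [AddCommGroup E] [Module R E]
    {B : E →ₗ[R] E →ₗ[R] R} {n s : ℕ} {a c : Idx n s → Module.End R E}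
    (h : ∀ p, LinearMap.IsAdjointPair B B (a p) (c p)) (k : Fin s) :
    LinearMap.IsAdjointPair B B ⇑(lefschetz a k) ⇑(dualLefschetz c k) :=
  LinearMap.isAdjointPair_sum _ fun _ _ => (h _).mul (h _)

theorem lcomm_eq_lie {R M : Type*} [CommRing R] [AddCommGroup M] [Module R M]
    (A B : Module.End R M) : lcomm A B = ⁅A, B⁆ :=
  rfl

end Lefschetz

section Polysymplectic

open ExteriorAlgebra

variable {n s : ℕ}

theorem Lop_eq_lefschetz (k : Fin s) : Lop n s k = lefschetz (creation (bV n s)) k := by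
  refine LinearMap.ext fun x => ?_
  simp [Lop, lefschetz, creation, Finset.sum_mul, LinearMap.sum_apply, mul_assoc]

theorem sortedProd_reindex_eq_mono (S : Finset (Fin (n + n * s))) :
    sortedProd ℝ ((bV n s).reindex (idxEquiv n s)) S =
      mono n s (S.image (idxEquiv n s).symm) := by
  simp [mono, sortedProd, Module.Basis.reindex_apply, Finset.image_image]

theorem span_range_mono : Submodule.span ℝ (Set.range (mono n s)) = ⊤ := by
  refine top_le_iff.1 ?_
  rw [← span_range_sortedProd ((bV n s).reindex (idxEquiv n s)).span_eq]
  refine Submodule.span_mono ?_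
  rintro _ ⟨S, rfl⟩
  exact ⟨_, (sortedProd_reindex_eq_mono S).symm⟩

theorem isAdjointPair_creation_annihilation_of_mono
    {B : Wns n s →ₗ[ℝ] Wns n s →ₗ[ℝ] ℝ}
    (hB : ∀ P Q, B (mono n s P) (mono n s Q) = if P = Q then 1 else 0) (p : Idx n s) :
    LinearMap.IsAdjointPair B B (creation (bV n s) p) (annihilation (bV n s) p) := by
  rw [← creation_reindex _ (idxEquiv n s), ← annihilation_reindex _ (idxEquiv n s)]
  refine isAdjointPair_creation_annihilation _ (fun S T => ?_) _
  rw [sortedProd_reindex_eq_mono, sortedProd_reindex_eq_mono, hB]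
  simp [Finset.image_inj (idxEquiv n s).symm.injective]

end Polysymplectic

theorem stmt9_general (n s : ℕ)
    (B : Wns n s →ₗ[ℝ] Wns n s →ₗ[ℝ] ℝ)
    (hBortho : ∀ P Q : Finset (Idx n s),
      B (mono n s P) (mono n s Q) = if P = Q then 1 else 0)
    (Λ : Fin s → (Wns n s →ₗ[ℝ] Wns n s))
    (hΛ : ∀ (k : Fin s) (α β : Wns n s), B (Lop n s k α) β = B α (Λ k β)) :
    ∀ k h : Fin s, k ≠ h →
      lcomm (lcomm (Lop n s k) (Λ k)) (Lop n s h) = Lop n s h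
      ∧ lcomm (lcomm (Lop n s k) (Λ k)) (Λ h) = -(Λ h) := by
  intro k h hkh
  have hCAR := ExteriorAlgebra.isCAR_creation_annihilation (bV n s)
  have hsep : B.SeparatingRight :=
    LinearMap.separatingRight_of_orthonormal span_range_mono hBortho
  have hΛ_eq : ∀ m, Λ m = dualLefschetz (ExteriorAlgebra.annihilation (bV n s)) m := fun m =>
    LinearMap.IsAdjointPair.eq_of_separatingRight hsep (hΛ m) <| by
      rw [Lop_eq_lefschetz]
      exact isAdjointPair_lefschetz (isAdjointPair_creation_annihilation_of_mono hBortho) m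
  simp only [lcomm_eq_lie, hΛ_eq, Lop_eq_lefschetz]
  exact ⟨hCAR.lie_lie_lefschetz_of_ne hkh, hCAR.lie_lie_dualLefschetz_of_ne hkh⟩

theorem stmt9 (n s : ℕ)
    (B : Wns n s →ₗ[ℝ] Wns n s →ₗ[ℝ] ℝ)
    (hBsymm : ∀ α β, B α β = B β α)
    (hBortho : ∀ P Q : Finset (Idx n s),
      B (mono n s P) (mono n s Q) = if P = Q then 1 else 0)
    (Λ : Fin s → (Wns n s →ₗ[ℝ] Wns n s))
    (hΛ : ∀ (k : Fin s) (α β : Wns n s), B (Lop n s k α) β = B α (Λ k β)) :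
    ∀ k h : Fin s, k ≠ h →
      lcomm (lcomm (Lop n s k) (Λ k)) (Lop n s h) = Lop n s h
      ∧ lcomm (lcomm (Lop n s k) (Λ k)) (Λ h) = -(Λ h) :=
  stmt9_general n s B hBortho Λ hΛ
end
end
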